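/- The module of Kähler differentials Ω_{R₁/ℝ} is a free R₁-module of rank one with basis the element ω = Y·dX − X·dY; that is, the R₁-linear map R₁ → Ω_{R₁/ℝ} sending r to r·ω is bijective. -/

import Mathlib

noncomputable section

/-- The coordinate ring `R₁ = ℝ[X,Y]/(X²+Y²+1)` of the affine open `U₁ = D₊(z)` of the
real anisotropic conic `C = V(x²+y²+z²) ⊂ ℙ²_ℝ`. -/
def R1 : Type :=
  MvPolynomial (Fin 2) ℝ ⧸
    Ideal.span {(MvPolynomial.X 0 : MvPolynomial (Fin 2) ℝ) ^ 2 + MvPolynomial.X 1 ^ 2 + 1}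

instance : CommRing R1 := Ideal.Quotient.commRing _
instance : Algebra ℝ R1 := Ideal.Quotient.algebra ℝ

/-- `X`, the image of the first variable in `R₁` (the rational function `x/z`). -/
def X1 : R1 := Ideal.Quotient.mk _ (MvPolynomial.X 0)

/-- `Y`, the image of the second variable in `R₁` (the rational function `y/z`). -/
def Y1 : R1 := Ideal.Quotient.mk _ (MvPolynomial.X 1)

/-! ### Auxiliary setup -/

open MvPolynomial

/-- The defining ideal. -/
def I1 : Ideal (MvPolynomial (Fin 2) ℝ) :=
  Ideal.span {(MvPolynomial.X 0 : MvPolynomial (Fin 2) ℝ) ^ 2 + MvPolynomial.X 1 ^ 2 + 1}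

instance : Algebra (MvPolynomial (Fin 2) ℝ) R1 := Ideal.Quotient.algebra _
instance : IsScalarTower ℝ (MvPolynomial (Fin 2) ℝ) R1 := Ideal.Quotient.isScalarTower _ _ _
instance : @Module ℝ R1 (Ring.toSemiring) (AddCommGroup.toAddCommMonoid) := Algebra.toModule
instance : @Module R1 R1 (Ring.toSemiring) (AddCommGroup.toAddCommMonoid) := Semiring.toModule
instance : @Module R1 R1 (CommSemiring.toSemiring) (AddCommGroup.toAddCommMonoid) := Semiring.toModule

/-- The quotient map as a ring hom, with `R1` as target. -/
def mk1 : MvPolynomial (Fin 2) ℝ →+* R1 := Ideal.Quotient.mk I1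

lemma mk1_X0 : mk1 (X 0) = X1 := rfl
lemma mk1_X1 : mk1 (X 1) = Y1 := rfl

lemma sq_rel : X1 * X1 + Y1 * Y1 + 1 = (0 : R1) := by
  have hmem : ((X 0 : MvPolynomial (Fin 2) ℝ) ^ 2 + X 1 ^ 2 + 1) ∈ I1 :=
    Ideal.subset_span rfl
  have h : mk1 ((X 0 : MvPolynomial (Fin 2) ℝ) ^ 2 + X 1 ^ 2 + 1) = 0 :=
    Ideal.Quotient.eq_zero_iff_mem.mpr hmem
  have h2 : mk1 (X 0) * mk1 (X 0) + mk1 (X 1) * mk1 (X 1) + 1 = 0 := by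
    rw [← h]; push_cast [map_add, map_pow, map_one]; ring
  simpa [mk1_X0, mk1_X1] using h2

/-- The derivation on the polynomial ring sending `X₀ ↦ Y₁`, `X₁ ↦ -X₁` (values in `R1`). -/
def D0 : Derivation ℝ (MvPolynomial (Fin 2) ℝ) R1 :=
  MvPolynomial.mkDerivation ℝ ![Y1, -X1]

lemma smul_mk1 (p : MvPolynomial (Fin 2) ℝ) (m : R1) : p • m = mk1 p * m := by
  rw [Algebra.smul_def]; rfl

lemma D0_X0 : D0 (X 0) = Y1 := by simp [D0, MvPolynomial.mkDerivation_X]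

lemma D0_X1 : D0 (X 1) = -X1 := by simp [D0, MvPolynomial.mkDerivation_X]

lemma D0_f : D0 ((X 0 : MvPolynomial (Fin 2) ℝ) ^ 2 + X 1 ^ 2 + 1) = 0 := by
  rw [map_add, map_add, Derivation.map_one_eq_zero, pow_two, pow_two,
    Derivation.leibniz, Derivation.leibniz, D0_X0, D0_X1]
  simp only [smul_mk1, mk1_X0, mk1_X1]
  ring

lemma D0_ker : ∀ p ∈ I1.restrictScalars ℝ, D0 p = 0 := by
  intro p hp
  rw [Submodule.restrictScalars_mem, I1, Ideal.mem_span_singleton'] at hp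
  obtain ⟨a, rfl⟩ := hp
  rw [Derivation.leibniz, D0_f, smul_zero, zero_add, smul_mk1]
  have : mk1 ((X 0 : MvPolynomial (Fin 2) ℝ) ^ 2 + X 1 ^ 2 + 1) = 0 :=
    Ideal.Quotient.eq_zero_iff_mem.mpr (Ideal.subset_span rfl)
  rw [this, zero_mul]

/-- The induced `ℝ`-linear map `R1 → R1`. -/
def ell : R1 →ₗ[ℝ] R1 :=
  (Submodule.liftQ (I1.restrictScalars ℝ) D0.toLinearMap
      (fun x hx => LinearMap.mem_ker.mpr (D0_ker x hx))).comp
    (Submodule.Quotient.restrictScalarsEquiv ℝ I1).symm.toLinearMap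

lemma ell_mk1 (p : MvPolynomial (Fin 2) ℝ) : ell (mk1 p) = D0 p := rfl

/-- The derivation `R1 → R1` with `X₁ ↦ Y₁`, `Y₁ ↦ -X₁`. -/
def Dbar : @Derivation ℝ R1 R1 _ _ (AddCommGroup.toAddCommMonoid) _ _ _ where
  toLinearMap := ell
  map_one_eq_zero' := by
    have h : (1 : R1) = mk1 1 := (map_one mk1).symm
    exact (congrArg ell h).trans ((ell_mk1 1).trans D0.map_one_eq_zero)
  leibniz' := by
    intro a b
    obtain ⟨p, rfl⟩ := Ideal.Quotient.mk_surjective a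
    obtain ⟨q, rfl⟩ := Ideal.Quotient.mk_surjective b
    show ell (mk1 p * mk1 q) = mk1 p • ell (mk1 q) + mk1 q • ell (mk1 p)
    rw [← map_mul, ell_mk1, ell_mk1, ell_mk1, Derivation.leibniz,
      smul_mk1, smul_mk1, smul_eq_mul, smul_eq_mul]

lemma Dbar_X1 : Dbar X1 = Y1 := by
  show ell (mk1 (X 0)) = Y1
  rw [ell_mk1, D0_X0]

lemma Dbar_Y1 : Dbar Y1 = -X1 := by
  show ell (mk1 (X 1)) = -X1
  rw [ell_mk1, D0_X1]

/-- the module of Kähler differentials `Ω_{R₁/ℝ}` is a free `R₁`-module of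
rank one with basis `ω = Y·dX − X·dY`; i.e. the `R₁`-linear map `r ↦ r·ω` is bijective. -/
theorem statement_7 :
    Function.Bijective (fun r : R1 =>
      r • (Y1 • (KaehlerDifferential.D ℝ R1) X1 - X1 • (KaehlerDifferential.D ℝ R1) Y1)) := by
  set d := KaehlerDifferential.D ℝ R1 with hd
  set ω := Y1 • d X1 - X1 • d Y1 with hω
  -- the relation X·dX + Y·dY = 0
  have hrel : X1 • d X1 + Y1 • d Y1 = 0 := by
    have h0 : d (X1 * X1 + Y1 * Y1 + 1) = 0 := by rw [sq_rel]; exact map_zero d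
    have h2 : (X1 • d X1 + Y1 • d Y1) + (X1 • d X1 + Y1 • d Y1) = 0 := by
      rw [map_add, map_add, Derivation.map_one_eq_zero, Derivation.leibniz,
        Derivation.leibniz] at h0
      rw [← h0]; abel
    have h3 : X1 • d X1 + Y1 • d Y1 =
        (1 / 2 : ℝ) • ((X1 • d X1 + Y1 • d Y1) + (X1 • d X1 + Y1 • d Y1)) := by
      rw [← two_smul ℝ, smul_smul]; norm_num
    rw [h3, h2, smul_zero]
  have hc : -(X1 * X1) - Y1 * Y1 - 1 = (0 : R1) := by linear_combination -sq_rel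
  have hdX : (-Y1) • ω = d X1 := by
    have e1 : (-Y1) • ω =
        d X1 + X1 • (X1 • d X1 + Y1 • d Y1) + (-(X1 * X1) - Y1 * Y1 - 1) • d X1 := by
      rw [hω]; module
    rw [e1, hrel, hc, smul_zero, zero_smul, add_zero, add_zero]
  have hdY : X1 • ω = d Y1 := by
    have e2 : X1 • ω =
        d Y1 + Y1 • (X1 • d X1 + Y1 • d Y1) + (-(X1 * X1) - Y1 * Y1 - 1) • d Y1 := by
      rw [hω]; module
    rw [e2, hrel, hc, smul_zero, zero_smul, add_zero, add_zero]
  constructor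
  · -- injectivity, via the derivation `Dbar`
    intro a b hab
    have hφ := congrArg Dbar.liftKaehlerDifferential hab
    simp only [map_smul] at hφ
    have hφω : Dbar.liftKaehlerDifferential ω = -1 := by
      rw [hω, LinearMap.map_sub, LinearMap.map_smul, LinearMap.map_smul, hd,
        Derivation.liftKaehlerDifferential_comp_D, Derivation.liftKaehlerDifferential_comp_D,
        Dbar_X1, Dbar_Y1, smul_eq_mul, smul_eq_mul]
      linear_combination sq_rel
    rw [hφω, smul_eq_mul, smul_eq_mul] at hφ
    linear_combination -hφ
  · -- surjectivity
    have hspan : ∀ s : R1, d s ∈ Submodule.span R1 {ω} := by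
      intro s
      obtain ⟨p, rfl⟩ := Ideal.Quotient.mk_surjective (I := I1) s
      induction p using MvPolynomial.induction_on with
      | C a =>
        have h : (Ideal.Quotient.mk I1 (MvPolynomial.C a) : R1) = algebraMap ℝ R1 a := rfl
        rw [h, Derivation.map_algebraMap]
        exact zero_mem _
      | add p q hp hq =>
        show d (mk1 p + mk1 q) ∈ _
        rw [map_add]
        exact add_mem hp hq
      | mul_X p i hp =>
        show d (mk1 p * mk1 (X i)) ∈ _
        rw [Derivation.leibniz]
        refine add_mem (Submodule.smul_mem _ _ ?_) (Submodule.smul_mem _ _ hp)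
        fin_cases i
        · show d X1 ∈ _
          rw [← hdX]
          exact Submodule.smul_mem _ _ (Submodule.mem_span_singleton_self ω)
        · show d Y1 ∈ _
          rw [← hdY]
          exact Submodule.smul_mem _ _ (Submodule.mem_span_singleton_self ω)
    have htop : Submodule.span R1 {ω} = ⊤ := by
      rw [eq_top_iff, ← KaehlerDifferential.span_range_derivation ℝ R1]
      refine Submodule.span_le.mpr ?_
      rintro _ ⟨s, rfl⟩
      exact hspan s
    intro m
    have hm : m ∈ Submodule.span R1 {ω} := htop ▸ Submodule.mem_top
    obtain ⟨r, hr⟩ := Submodule.mem_span_singleton.mp hm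
    exact ⟨r, hr⟩
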